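/- For every subset A ⊆ ℚ̄, the equality inf I_N(A ∖ μ_A) = inf I_B(A) holds, where the infima are taken in ℝ ∪ {±∞}. -/

import Mathlib

open Polynomial

noncomputable section

/-- The primitive integer minimal polynomial of an algebraic number `x ∈ ℂ`. -/
def intMinpoly (x : ℂ) : Polynomial ℤ :=
  (IsLocalization.integerNormalization (nonZeroDivisors ℤ) (minpoly ℚ x)).primPart

/-- `deg(x) = [ℚ(x):ℚ]`, the degree of an algebraic number. -/
def degQ (x : ℂ) : ℕ := (minpoly ℚ x).natDegree

/-- The absolute logarithmic Weil height of an algebraic number `x`, given as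
`(1/deg x) · log (|a₀| · ∏ max(1,|conjugate|))` where `a₀` is the leading coefficient of the
primitive integer minimal polynomial of `x` and the product runs over the complex roots
of that polynomial (i.e. the conjugates of `x`). -/
def weilHeight (x : ℂ) : ℝ :=
  (degQ x : ℝ)⁻¹ *
    Real.log (((intMinpoly x).leadingCoeff.natAbs : ℝ) *
      (((intMinpoly x).map (Int.castRingHom ℂ)).roots.map
        (fun z => max 1 ‖z‖)).prod)

/-- The `γ`-weighted Weil height `h_γ(x) = deg(x)^γ · h(x)`. -/
def wheight (γ : ℝ) (x : ℂ) : ℝ := (degQ x : ℝ) ^ γ * weilHeight x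

/-- `x` is a root of unity. -/
def IsRootOfUnity (x : ℂ) : Prop := ∃ n : ℕ, 0 < n ∧ x ^ n = 1

/-- `μ_A`, the set of roots of unity contained in `A`. -/
def muSet (A : Set ℂ) : Set ℂ := {a ∈ A | IsRootOfUnity a}

/-- `A` has the `γ`-Northcott property: for every `C > 0` there are only finitely many
`a ∈ A` with `h_γ(a) < C`. -/
def NorthcottProp (γ : ℝ) (A : Set ℂ) : Prop :=
  ∀ C : ℝ, 0 < C → {a ∈ A | wheight γ a < C}.Finite

/-- `A` has the `γ`-Bogomolov property: for some `C > 0` there are only finitely many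
`a ∈ A ∖ μ_A` with `h_γ(a) < C`. -/
def BogomolovProp (γ : ℝ) (A : Set ℂ) : Prop :=
  ∃ C : ℝ, 0 < C ∧ {a ∈ A \ muSet A | wheight γ a < C}.Finite

/-- The `γ`-Northcott number `Nor_γ(A) = inf {C > 0 | N_γ(A,C) = ∞}` (equal to `∞` if
`N_γ(A,C)` is finite for every `C`). -/
def northcottNumber (γ : ℝ) (A : Set ℂ) : EReal :=
  sInf {x : EReal | ∃ C : ℝ, x = (C : EReal) ∧ 0 < C ∧ ¬ {a ∈ A | wheight γ a < C}.Finite}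

/-- `I_N(A) = {γ ∈ ℝ | A has γ-(N)}`. -/
def IN (A : Set ℂ) : Set ℝ := {γ | NorthcottProp γ A}

/-- `I_B(A) = {γ ∈ ℝ | A has γ-(B)}`. -/
def IB (A : Set ℂ) : Set ℝ := {γ | BogomolovProp γ A}

/-! The Weil height is `h(x) = log M(f_x) / deg(x)`, with `M` the Mahler measure and `f_x` the
primitive integer minimal polynomial of `x`, so Northcott's theorem for `M` leaves only finitely
many algebraic numbers of bounded degree and bounded height. If `C ≤ h_γ(a)` and `h_γ'(a) < C'`
with `γ < γ'`, then `deg(a)^(γ' - γ) = h_γ'(a) / h_γ(a) < C' / C`. So if γ-(B) holds for `A` with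
constant `C`, all but finitely many `a ∈ A ∖ μ_A` with `h_γ'(a) < C'` have bounded degree, and
`A ∖ μ_A` has γ'-(N) for every `γ' > γ`. Conversely γ-(N) for `A ∖ μ_A` gives γ-(B) for `A`
with any constant. -/

theorem intMinpoly_ne_zero (x : ℂ) : intMinpoly x ≠ 0 :=
  primPart_ne_zero _

section IntMinpoly

variable {x : ℂ}

theorem degQ_pos (hx : IsAlgebraic ℚ x) : 0 < degQ x :=
  minpoly.natDegree_pos hx.isIntegral

theorem intMinpoly_map_eq_smul_minpoly (hx : IsAlgebraic ℚ x) :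
    ∃ c : ℚ, c ≠ 0 ∧ (intMinpoly x).map (algebraMap ℤ ℚ) = c • minpoly ℚ x := by
  obtain ⟨b, hbM, hb⟩ := IsLocalization.integerNormalization_spec (nonZeroDivisors ℤ)
    (minpoly ℚ x)
  set N := IsLocalization.integerNormalization (nonZeroDivisors ℤ) (minpoly ℚ x)
  have hN : N ≠ 0 := by
    rw [Ne, IsFractionRing.integerNormalization_eq_zero_iff]
    exact minpoly.ne_zero hx.isIntegral
  have hcontent : (N.content : ℚ) ≠ 0 := by exact_mod_cast mt content_eq_zero_iff.1 hN
  have hb0 : (b : ℚ) ≠ 0 := by exact_mod_cast nonZeroDivisors.ne_zero hbM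
  refine ⟨b / (N.content : ℚ), div_ne_zero hb0 hcontent, ?_⟩
  rw [← Int.cast_smul_eq_zsmul ℚ, eq_C_content_mul_primPart N, Polynomial.map_mul, map_C] at hb
  change N.primPart.map _ = _
  rw [div_eq_inv_mul, mul_smul, ← hb, smul_eq_C_mul, ← mul_assoc, ← C_mul]
  simp [hcontent]

theorem natDegree_intMinpoly (hx : IsAlgebraic ℚ x) : (intMinpoly x).natDegree = degQ x := by
  obtain ⟨c, hc, h⟩ := intMinpoly_map_eq_smul_minpoly hx
  rw [← natDegree_map_eq_of_injective (algebraMap ℤ ℚ).injective_int, h, smul_eq_C_mul,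
    natDegree_C_mul hc, degQ]

theorem intMinpoly_map_eval_self (hx : IsAlgebraic ℚ x) :
    ((intMinpoly x).map (Int.castRingHom ℂ)).eval x = 0 := by
  obtain ⟨c, -, h⟩ := intMinpoly_map_eq_smul_minpoly hx
  have := congrArg (aeval x) h
  rwa [aeval_map_algebraMap, map_smul, minpoly.aeval, smul_zero, aeval_def, eval₂_eq_eval_map,
    algebraMap_int_eq] at this

theorem log_mahlerMeasure_intMinpoly (hx : IsAlgebraic ℚ x) :
    Real.log ((intMinpoly x).map (Int.castRingHom ℂ)).mahlerMeasure =
      degQ x * weilHeight x := by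
  have hd : (degQ x : ℝ) ≠ 0 := by exact_mod_cast (degQ_pos hx).ne'
  rw [weilHeight, ← mul_assoc, mul_inv_cancel₀ hd, one_mul,
    mahlerMeasure_eq_leadingCoeff_mul_prod_roots,
    leadingCoeff_map_of_injective (Int.castRingHom ℂ).injective_int]
  simp

end IntMinpoly

theorem finite_setOf_degQ_le_weilHeight_le (D : ℕ) (H : ℝ) :
    {x : ℂ | IsAlgebraic ℚ x ∧ degQ x ≤ D ∧ weilHeight x ≤ H}.Finite := by
  set B : NNReal := ⟨Real.exp (D * max H 0), (Real.exp_pos _).le⟩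
  refine ((finite_mahlerMeasure_le D B).biUnion fun p _ ↦
    ((p.map (Int.castRingHom ℂ)).roots.toFinset.finite_toSet)).subset ?_
  rintro x ⟨hx, hdeg, hht⟩
  have hM : ((intMinpoly x).map (Int.castRingHom ℂ)).mahlerMeasure ≤ B := by
    rw [← Real.exp_log (lt_of_lt_of_le one_pos
      (one_le_mahlerMeasure_of_ne_zero (intMinpoly_ne_zero x))), log_mahlerMeasure_intMinpoly hx]
    refine Real.exp_le_exp.2 ?_
    calc (degQ x : ℝ) * weilHeight x ≤ degQ x * max H 0 := by
          gcongr; exact le_max_of_le_left hht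
      _ ≤ D * max H 0 := by gcongr
  have hroot : x ∈ ((intMinpoly x).map (Int.castRingHom ℂ)).roots := by
    rw [mem_roots ((Polynomial.map_ne_zero_iff (Int.castRingHom ℂ).injective_int).2
      (intMinpoly_ne_zero x)), IsRoot, intMinpoly_map_eval_self hx]
  simp only [Set.mem_iUnion]
  exact ⟨intMinpoly x, ⟨(natDegree_intMinpoly hx).trans_le hdeg, hM⟩, by simpa using hroot⟩

theorem finite_setOf_degQ_le_wheight_lt (γ : ℝ) (D : ℕ) (C : ℝ) :
    {x : ℂ | IsAlgebraic ℚ x ∧ degQ x ≤ D ∧ wheight γ x < C}.Finite := by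
  refine (finite_setOf_degQ_le_weilHeight_le D (max C 0 * (D : ℝ) ^ |γ|)).subset ?_
  rintro x ⟨hx, hdeg, hw⟩
  refine ⟨hx, hdeg, ?_⟩
  have hd1 : (1 : ℝ) ≤ degQ x := by exact_mod_cast degQ_pos hx
  have hdD : (degQ x : ℝ) ≤ D := by exact_mod_cast hdeg
  calc weilHeight x = (degQ x : ℝ) ^ (-γ) * wheight γ x := by
        rw [wheight, ← mul_assoc, ← Real.rpow_add (by positivity), neg_add_cancel,
          Real.rpow_zero, one_mul]
    _ ≤ (degQ x : ℝ) ^ (-γ) * max C 0 := by gcongr; exact le_max_of_le_left hw.le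
    _ ≤ (D : ℝ) ^ |γ| * max C 0 := by
        gcongr
        calc (degQ x : ℝ) ^ (-γ) ≤ (degQ x : ℝ) ^ |γ| :=
              Real.rpow_le_rpow_of_exponent_le hd1 (neg_le_abs γ)
          _ ≤ (D : ℝ) ^ |γ| := by gcongr
    _ = max C 0 * (D : ℝ) ^ |γ| := mul_comm _ _

theorem degQ_lt_of_le_wheight_of_wheight_lt {γ γ' C C' : ℝ} {a : ℂ} (ha : IsAlgebraic ℚ a)
    (hC : 0 < C) (hγ : γ < γ') (hlow : C ≤ wheight γ a) (hup : wheight γ' a < C') :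
    (degQ a : ℝ) < (C' / C) ^ (γ' - γ)⁻¹ := by
  have hd : (0 : ℝ) < degQ a := by exact_mod_cast degQ_pos ha
  have hh : 0 < weilHeight a := pos_of_mul_pos_right (hC.trans_le hlow) (by positivity)
  have hC' : 0 < C' := lt_trans (by unfold wheight; positivity) hup
  rw [Real.lt_rpow_inv_iff_of_pos hd.le (by positivity) (sub_pos.2 hγ)]
  calc (degQ a : ℝ) ^ (γ' - γ) = wheight γ' a / wheight γ a := by
        rw [Real.rpow_sub hd, wheight, wheight]
        field_simp
    _ < C' / C := div_lt_div₀ hup hlow hC'.le hC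

theorem NorthcottProp.of_finite_wheight_lt {S : Set ℂ} (hS : ∀ a ∈ S, IsAlgebraic ℚ a)
    {γ γ' C : ℝ} (hC : 0 < C) (hfin : {a ∈ S | wheight γ a < C}.Finite) (hγ : γ < γ') :
    NorthcottProp γ' S := by
  intro C' _
  set D := ⌈(C' / C) ^ (γ' - γ)⁻¹⌉₊
  refine (hfin.union (finite_setOf_degQ_le_wheight_lt γ' D C')).subset ?_
  rintro a ⟨ha, hup⟩
  by_cases hlow : wheight γ a < C
  · exact Or.inl ⟨ha, hlow⟩
  · have hdeg := degQ_lt_of_le_wheight_of_wheight_lt (hS a ha) hC hγ (not_lt.1 hlow) hup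
    exact Or.inr ⟨hS a ha, Nat.cast_le.1 (hdeg.le.trans (Nat.le_ceil _)), hup⟩

theorem BogomolovProp.northcottProp_diff_muSet {A : Set ℂ} (hA : ∀ a ∈ A, IsAlgebraic ℚ a)
    {γ γ' : ℝ} (h : BogomolovProp γ A) (hγ : γ < γ') : NorthcottProp γ' (A \ muSet A) :=
  let ⟨_, hC, hfin⟩ := h
  .of_finite_wheight_lt (fun a ha ↦ hA a ha.1) hC hfin hγ

theorem NorthcottProp.bogomolovProp {A : Set ℂ} {γ : ℝ} (h : NorthcottProp γ (A \ muSet A)) :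
    BogomolovProp γ A :=
  ⟨1, one_pos, h 1 one_pos⟩

theorem EReal.sInf_image_coe_eq_of_subset_of_forall_lt_mem {S T : Set ℝ} (hST : S ⊆ T)
    (hTS : ∀ γ ∈ T, ∀ γ', γ < γ' → γ' ∈ S) :
    sInf ((↑) '' S : Set EReal) = sInf ((↑) '' T) := by
  refine le_antisymm (le_sInf ?_) (sInf_le_sInf (Set.image_mono hST))
  rintro _ ⟨γ, hγ, rfl⟩
  by_contra! hlt
  obtain ⟨z, hγz, hz⟩ := EReal.exists_between_coe_real hlt
  exact (sInf_le (Set.mem_image_of_mem _ (hTS γ hγ z (mod_cast hγz)))).not_gt hz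

/-- For every `A ⊆ ℚ̄`, `inf I_N(A ∖ μ_A) = inf I_B(A)` (infima taken in `ℝ ∪ {±∞}`). -/
theorem inf_IN_diff_mu_eq_inf_IB (A : Set ℂ) (hA : ∀ a ∈ A, IsAlgebraic ℚ a) :
    sInf ((fun γ : ℝ => (γ : EReal)) '' IN (A \ muSet A)) =
      sInf ((fun γ : ℝ => (γ : EReal)) '' IB A) :=
  EReal.sInf_image_coe_eq_of_subset_of_forall_lt_mem (fun _ ↦ NorthcottProp.bogomolovProp)
    fun _ hγ _ ↦ hγ.northcottProp_diff_muSet hA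

end
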